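/- Let A be an almost negative n×n matrix with a₁₁ > 0 such that the link matrix lk({1}, A) is reducible with respect to a partition L ⊔ M of {2,…,n}. Then a_{lm} = 0 for all l ∈ L, m ∈ M, and moreover either a_{1l} = 0 for all l ∈ L or a_{1m} = 0 for all m ∈ M; consequently A itself is reducible. -/

import Mathlib

open Matrix

/-- The link matrix `lk({0}, A)`. -/
noncomputable def lkOne {n : ℕ} (A : Matrix (Fin (n + 1)) (Fin (n + 1)) ℝ) : Matrix (Fin n) (Fin n) ℝ :=
  Matrix.of fun i j => A i.succ j.succ - A 0 i.succ * A 0 j.succ / A 0 0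

/-- A symmetric matrix is reducible if its index set admits a partition into two nonempty
parts with all entries between the parts equal to zero. -/
def MatrixReducible {m : Type*} [Fintype m] [DecidableEq m] (A : Matrix m m ℝ) : Prop :=
  ∃ L M : Finset m, L.Nonempty ∧ M.Nonempty ∧ Disjoint L M ∧ L ∪ M = Finset.univ ∧
    ∀ l ∈ L, ∀ k ∈ M, A l k = 0

/- The link entry `c - a b / d` is a sum of two non-positive terms `c` and `-(a b / d)`,
so it vanishes only if both do. -/
theorem eq_zero_and_or_of_sub_mul_div_eq_zero {K : Type*} [Field K] [LinearOrder K]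
    [IsStrictOrderedRing K] {a b c d : K} (ha : a ≤ 0) (hb : b ≤ 0) (hc : c ≤ 0) (hd : 0 < d)
    (h : c - a * b / d = 0) : c = 0 ∧ (a = 0 ∨ b = 0) := by
  have hab : 0 ≤ a * b / d := div_nonneg (mul_nonneg_of_nonpos_of_nonpos ha hb) hd.le
  have hc0 : c = 0 := by linarith
  refine ⟨hc0, ?_⟩
  have : a * b / d = 0 := by linarith
  simpa [hd.ne'] using this

theorem eq_zero_and_or_of_lkOne_eq_zero {n : ℕ} {A : Matrix (Fin (n + 1)) (Fin (n + 1)) ℝ}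
    (hneg : ∀ i j : Fin (n + 1), i ≠ j → A i j ≤ 0) (hpos : 0 < A 0 0) {l m : Fin n}
    (hlm : l ≠ m) (h : lkOne A l m = 0) :
    A l.succ m.succ = 0 ∧ (A 0 l.succ = 0 ∨ A 0 m.succ = 0) :=
  eq_zero_and_or_of_sub_mul_div_eq_zero (hneg _ _ (Fin.succ_ne_zero l).symm)
    (hneg _ _ (Fin.succ_ne_zero m).symm) (hneg _ _ (Fin.succ_injective _ |>.ne hlm)) hpos h

theorem forall_or_forall_of_forall_forall_or {α β : Type*} {s : Set α} {t : Set β}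
    {p : α → Prop} {q : β → Prop} (h : ∀ x ∈ s, ∀ y ∈ t, p x ∨ q y) :
    (∀ x ∈ s, p x) ∨ (∀ y ∈ t, q y) := by
  by_contra! ⟨⟨x, hx, hpx⟩, ⟨y, hy, hqy⟩⟩
  exact (h x hx y hy).elim hpx hqy

/- The index `0` joins the part `M` of a partition of the remaining indices. -/
theorem matrixReducible_of_succ {n : ℕ} {A : Matrix (Fin (n + 1)) (Fin (n + 1)) ℝ}
    (hsymm : A.IsSymm) {L M : Finset (Fin n)} (hL : L.Nonempty) (hdisj : Disjoint L M)
    (hunion : L ∪ M = Finset.univ) (hcross : ∀ l ∈ L, ∀ m ∈ M, A l.succ m.succ = 0)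
    (hrow : ∀ l ∈ L, A 0 l.succ = 0) : MatrixReducible A := by
  refine ⟨L.image Fin.succ, insert 0 (M.image Fin.succ), hL.image _,
    Finset.insert_nonempty _ _, ?_, ?_, ?_⟩
  · rw [Finset.disjoint_insert_right, Finset.disjoint_image (Fin.succ_injective n)]
    simp [hdisj, Fin.succ_ne_zero]
  · rw [Finset.union_insert, ← Finset.image_union, hunion, Fin.univ_succ, Finset.cons_eq_insert,
      Finset.map_eq_image]
    rfl
  · simp only [Finset.mem_image, Finset.mem_insert]
    rintro _ ⟨l, hl, rfl⟩ _ (rfl | ⟨m, hm, rfl⟩)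
    · rw [← hsymm.apply]
      exact hrow l hl
    · exact hcross l hl m hm

/-- If `A` is almost negative with `A 0 0 > 0` and the link matrix `lk({0}, A)` is
reducible with respect to a partition `L ⊔ M` of the remaining indices, then `A l m = 0` for all
`l ∈ L`, `m ∈ M`, and either `A 0 l = 0` for all `l ∈ L` or `A 0 m = 0` for all `m ∈ M`;
consequently `A` itself is reducible. -/
theorem stmt7 (n : ℕ) (A : Matrix (Fin (n + 1)) (Fin (n + 1)) ℝ) (hsymm : A.IsSymm)
    (hneg : ∀ i j : Fin (n + 1), i ≠ j → A i j ≤ 0) (hpos : 0 < A 0 0)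
    (L M : Finset (Fin n)) (hL : L.Nonempty) (hM : M.Nonempty) (hdisj : Disjoint L M)
    (hunion : L ∪ M = Finset.univ)
    (hzero : ∀ l ∈ L, ∀ m ∈ M, lkOne A l m = 0) :
    (∀ l ∈ L, ∀ m ∈ M, A l.succ m.succ = 0) ∧
    ((∀ l ∈ L, A 0 l.succ = 0) ∨ (∀ m ∈ M, A 0 m.succ = 0)) ∧
    MatrixReducible A := by
  have key : ∀ l ∈ L, ∀ m ∈ M, A l.succ m.succ = 0 ∧ (A 0 l.succ = 0 ∨ A 0 m.succ = 0) :=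
    fun l hl m hm => eq_zero_and_or_of_lkOne_eq_zero hneg hpos
      (fun h => Finset.disjoint_left.mp hdisj hl (h ▸ hm)) (hzero l hl m hm)
  have hcross : ∀ l ∈ L, ∀ m ∈ M, A l.succ m.succ = 0 := fun l hl m hm => (key l hl m hm).1
  have hrow : (∀ l ∈ L, A 0 l.succ = 0) ∨ (∀ m ∈ M, A 0 m.succ = 0) :=
    forall_or_forall_of_forall_forall_or (s := (L : Set (Fin n))) (t := (M : Set (Fin n)))
      fun l hl m hm => (key l hl m hm).2
  refine ⟨hcross, hrow, hrow.elim (matrixReducible_of_succ hsymm hL hdisj hunion hcross) ?_⟩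
  exact matrixReducible_of_succ hsymm hM hdisj.symm (Finset.union_comm L M ▸ hunion)
    (fun m hm l hl => (hsymm.apply _ _).trans (hcross l hl m hm))
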